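/- Let V be a finite-dimensional vector space over ℂ, Γ a linearly ordered set, and v : V∖{0} → Γ a pre-valuation with one-dimensional leaves. Then the dimension of V over ℂ equals the cardinality of the image set v(V∖{0}) = {v(f) : f ∈ V, f ≠ 0}. -/

import Mathlib

/-!
Choose for every value `γ` a nonzero vector `r γ` of value `γ`. Vectors with pairwise distinct
values are linearly independent, because the value of their sum is the smallest of their values,
so the sum is nonzero; in particular only finitely many values occur. They also span: if `f` were
a vector outside their span of maximal value, then by the one-dimensionality of the leaf of `v f`
some `f - c • r (v f)` would be a vector of strictly larger value still outside the span.
-/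

section

variable {K V Γ : Type*} [AddCommGroup V] [LinearOrder Γ]

section Prevaluation

variable [DivisionRing K] [Module K V]

variable (K) in
structure IsPrevaluation (v : V → Γ) : Prop where
  map_add : ∀ f g : V, f ≠ 0 → g ≠ 0 → f + g ≠ 0 → min (v f) (v g) ≤ v (f + g)
  map_smul : ∀ (c : K) (f : V), c ≠ 0 → f ≠ 0 → v (c • f) = v f

/-- The convention `v 0 = ⊤` makes the ultrametric inequality unconditional. -/
noncomputable def extendByTop (v : V → Γ) (f : V) : WithTop Γ :=
  open Classical in if f = 0 then ⊤ else v f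

variable {v : V → Γ}

namespace IsPrevaluation

theorem map_neg (hv : IsPrevaluation K v) {f : V} (hf : f ≠ 0) : v (-f) = v f := by
  rw [← neg_one_smul K f]
  exact hv.map_smul _ f (neg_ne_zero.2 one_ne_zero) hf

theorem add_ne_zero_and_map_add_of_lt (hv : IsPrevaluation K v) {f g : V} (hf : f ≠ 0)
    (hg : g ≠ 0) (hlt : v f < v g) : f + g ≠ 0 ∧ v (f + g) = v f := by
  have hfg : f + g ≠ 0 := by
    intro h
    rw [eq_neg_of_add_eq_zero_left h, hv.map_neg hg] at hlt
    exact hlt.false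
  refine ⟨hfg, le_antisymm ?_ ?_⟩
  · have key := hv.map_add (f + g) (-g) hfg (neg_ne_zero.2 hg) (by simpa using hf)
    rw [add_neg_cancel_right, hv.map_neg hg, min_le_iff] at key
    exact key.resolve_right hlt.not_ge
  · simpa [min_eq_left hlt.le] using hv.map_add f g hf hg hfg

theorem extendByTop_add_of_lt (hv : IsPrevaluation K v) {f g : V}
    (hlt : extendByTop v f < extendByTop v g) : extendByTop v (f + g) = extendByTop v f := by
  by_cases hg : g = 0
  · rw [hg, add_zero]
  have hf : f ≠ 0 := by
    rintro rfl
    simp [extendByTop] at hlt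
  simp only [extendByTop, hf, hg, if_false, WithTop.coe_lt_coe] at hlt ⊢
  obtain ⟨hfg, hval⟩ := hv.add_ne_zero_and_map_add_of_lt hf hg hlt
  rw [if_neg hfg, hval]

theorem extendByTop_sum (hv : IsPrevaluation K v) {w : Γ → V} (s : Finset Γ)
    (hw : ∀ γ ∈ s, w γ ≠ 0 ∧ v (w γ) = γ) : extendByTop v (∑ γ ∈ s, w γ) = s.min := by
  classical
  induction s using Finset.induction_on_min with
  | empty => simp [extendByTop]
  | insert a s ha ih =>
    have ha_notin : a ∉ s := fun h => (ha a h).false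
    obtain ⟨hwa0, hwav⟩ := hw a (s.mem_insert_self a)
    have hwa : extendByTop v (w a) = a := by simp [extendByTop, hwa0, hwav]
    have hrest := ih fun γ hγ => hw γ (Finset.mem_insert_of_mem hγ)
    have hlt : (a : WithTop Γ) < s.min :=
      (Finset.lt_inf_iff (WithTop.coe_lt_top a)).2 fun b hb => WithTop.coe_lt_coe.2 (ha b hb)
    rw [Finset.sum_insert ha_notin, Finset.min_insert, min_eq_left_of_lt hlt, ← hwa,
      hv.extendByTop_add_of_lt (by rwa [hwa, hrest])]

theorem linearIndepOn (hv : IsPrevaluation K v) {r : Γ → V} {s : Set Γ}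
    (hr : ∀ γ ∈ s, r γ ≠ 0 ∧ v (r γ) = γ) : LinearIndepOn K r s := by
  classical
  rw [linearIndepOn_iff]
  intro l hl hzero
  have hterms : ∀ γ ∈ l.support, l γ • r γ ≠ 0 ∧ v (l γ • r γ) = γ := by
    intro γ hγ
    obtain ⟨hr0, hrv⟩ := hr γ (hl hγ)
    have hl0 := Finsupp.mem_support_iff.1 hγ
    exact ⟨smul_ne_zero hl0 hr0, by rw [hv.map_smul _ _ hl0 hr0, hrv]⟩
  have hsum := hv.extendByTop_sum l.support hterms
  rw [Finsupp.linearCombination_apply, Finsupp.sum] at hzero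
  rw [hzero] at hsum
  simpa [extendByTop, eq_comm (a := ⊤)] using hsum

end IsPrevaluation

end Prevaluation

section Leaves

variable [Ring K] [Module K V]

variable (K) in
def HasOneDimLeaves (v : V → Γ) : Prop :=
  ∀ f g : V, f ≠ 0 → g ≠ 0 → v f = v g →
    ∃ c : K, c ≠ 0 ∧ (g - c • f = 0 ∨ v g < v (g - c • f))

theorem HasOneDimLeaves.span_image_eq_top {v : V → Γ} (hleaves : HasOneDimLeaves K v)
    {S : Set Γ} (hS : S.Finite) (hvS : ∀ f : V, f ≠ 0 → v f ∈ S) {r : Γ → V}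
    (hr : ∀ γ ∈ S, r γ ≠ 0 ∧ v (r γ) = γ) : Submodule.span K (r '' S) = ⊤ := by
  set W := Submodule.span K (r '' S)
  by_contra hW
  obtain ⟨f₀, hf₀⟩ : ∃ f, f ∉ W := by
    simpa [Submodule.eq_top_iff'] using hW
  have hfinite : (v '' {f | f ∉ W}).Finite :=
    hS.subset <| Set.image_subset_iff.2 fun f hf => hvS f fun h => hf (h ▸ W.zero_mem)
  obtain ⟨f, hfW, hmax⟩ := Set.Finite.exists_maximalFor' v {f | f ∉ W} hfinite ⟨f₀, hf₀⟩
  have hf : f ≠ 0 := fun h => hfW (h ▸ W.zero_mem)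
  obtain ⟨hr0, hrv⟩ := hr (v f) (hvS f hf)
  have hrW : r (v f) ∈ W := Submodule.subset_span ⟨v f, hvS f hf, rfl⟩
  obtain ⟨c, -, hc⟩ := hleaves (r (v f)) f hr0 hf hrv
  have hsubW : f - c • r (v f) ∉ W := fun h => hfW (by simpa using W.add_mem h (W.smul_mem c hrW))
  rcases hc with h | h
  · exact hsubW (h ▸ W.zero_mem)
  · exact (hmax hsubW h.le).not_gt h

end Leaves

end

/-- If `v` is a pre-valuation with one-dimensional leaves on a
finite-dimensional complex vector space `V`, then `dim V` equals the cardinality of the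
image set `v (V ∖ {0})`. -/
theorem prevaluation_one_dim_leaves_finrank_eq_card_image
    (V : Type*) [AddCommGroup V] [Module ℂ V] [FiniteDimensional ℂ V]
    (Γ : Type*) [LinearOrder Γ]
    (v : V → Γ)
    (hv_add : ∀ f g : V, f ≠ 0 → g ≠ 0 → f + g ≠ 0 → min (v f) (v g) ≤ v (f + g))
    (hv_smul : ∀ (c : ℂ) (f : V), c ≠ 0 → f ≠ 0 → v (c • f) = v f)
    (hv_leaves : ∀ f g : V, f ≠ 0 → g ≠ 0 → v f = v g →
      ∃ c : ℂ, c ≠ 0 ∧ (g - c • f = 0 ∨ v g < v (g - c • f))) :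
    Module.finrank ℂ V = (v '' {f : V | f ≠ 0}).ncard := by
  have hv : IsPrevaluation ℂ v := ⟨hv_add, hv_smul⟩
  set S := v '' {f : V | f ≠ 0}
  set r := Function.invFunOn v {f : V | f ≠ 0}
  have hr : ∀ γ ∈ S, r γ ≠ 0 ∧ v (r γ) = γ := fun γ hγ => Function.invFunOn_pos hγ
  have hli : LinearIndepOn ℂ r S := hv.linearIndepOn hr
  have hS : S.Finite := Set.finite_coe_iff.1 hli.finite
  have hspan := HasOneDimLeaves.span_image_eq_top hv_leaves hS (fun f hf => ⟨f, hf, rfl⟩) hr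
  let b := Module.Basis.mk hli (by rw [← Set.image_eq_range, hspan])
  rw [Module.finrank_eq_nat_card_basis b, Nat.card_coe_set_eq]
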